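/- Consider the linear dispersive initial-boundary value problem ∂²w/∂t² + ∂⁴w/∂x⁴ = 1 on (0,1) × [0,∞), with w(x,0) = ∂w/∂t(x,0) = 0 for x ∈ (0,1) and w(0,t) = w(1,t) = ∂²w/∂x²(0,t) = ∂²w/∂x²(1,t) = 0 for t > 0. Then for every t ≥ 0 and every ε > 0, the solution satisfies w(·,t) ∈ H^{9/2−ε}(0,1) but w(·,t) ∉ H^{9/2}(0,1) (for generic t). -/

import Mathlib

/-!
Since `|1 - (-1)ᵏ| ≤ 2` and `|1 - cos| ≤ 2`, the coefficients satisfy `bₖ(t)² ≤ 64 / (kπ)¹⁰`,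
so `∑ k^{2s} bₖ(t)²` converges for every `s < 9/2`.

For `s = 9/2` the odd modes contribute a constant times `∑ₘ (1 - cos (ωₘ t))² / (2m+1)` with
`ωₘ = (2m+1)²π² → ∞`. By the Riemann–Lebesgue lemma, `∫_F (1 - cos (ω t))² → (3/2)|F|` as
`ω → ∞` for every set `F` of finite measure, so when `|F| > 0` the integrals of the terms over `F`
are eventually at least `|F| / (2m+1)` and their sum diverges. A series of nonnegative functions
whose integrals over every set of finite positive measure have divergent sum diverges almost
everywhere: otherwise it is bounded by some `M` on a set of finite positive measure, and
integrating over that set gives a finite sum.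
-/


open MeasureTheory Real Set

noncomputable section

/-- The `k`-th sine-Fourier coefficient of the explicit solution of
`∂²w/∂t² + ∂⁴w/∂x⁴ = 1` on `(0,1)` with homogeneous initial data and pinned boundary
conditions: expanding `1 = ∑ cₖ sin(kπx)` with `cₖ = 2(1 − (−1)ᵏ)/(kπ)`, the `k`-th mode of
`w(·,t)` is `cₖ (1 − cos(k²π²t)) / (k⁴π⁴)`. -/
def solCoef (k : ℕ) (t : ℝ) : ℝ :=
  (2 * (1 - (-1 : ℝ) ^ k) / (k * π)) * (1 - Real.cos ((k : ℝ) ^ 2 * π ^ 2 * t)) /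
    ((k : ℝ) ^ 4 * π ^ 4)

/-- Membership of `w(·,t)` in the Sobolev space `H^s(0,1)` for the pinned problem,
characterized by the decay of its sine-Fourier coefficients:
`∑ₖ k^{2s} |bₖ(t)|² < ∞`. -/
def solInHs (s t : ℝ) : Prop :=
  Summable fun k : ℕ => ((k : ℝ) + 1) ^ (2 * s) * (solCoef (k + 1) t) ^ 2

open Filter Topology
open scoped ENNReal

theorem Real.tendsto_integral_cos_mul_atTop {f : ℝ → ℝ} (hf : Integrable f) :
    Tendsto (fun ω : ℝ => ∫ t, Real.cos (ω * t) * f t) atTop (𝓝 0) := by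
  have hRL := Real.tendsto_integral_exp_smul_cocompact (fun t => (f t : ℂ))
  have hscale : Tendsto (fun ω : ℝ => ω / (2 * π)) atTop (cocompact ℝ) :=
    (tendsto_id.atTop_div_const (by positivity)).mono_right (by
      rw [cocompact_eq_atBot_atTop]; exact le_sup_right)
  have hre := (Complex.continuous_re.tendsto 0).comp (hRL.comp hscale)
  rw [Complex.zero_re] at hre
  refine hre.congr fun ω => ?_
  have hint : Integrable (fun t : ℝ => Real.fourierChar (-(t * (ω / (2 * π)))) • (f t : ℂ)) := by
    simpa [mul_comm] using (Real.fourierIntegral_convergent_iff (ω / (2 * π))).mpr hf.ofReal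
  rw [Function.comp_apply, Function.comp_apply, ← Complex.reCLM_apply,
    ← Complex.reCLM.integral_comp_comm hint]
  congr 1 with t
  rw [Complex.reCLM_apply, Circle.smul_def, Real.fourierChar_apply, smul_eq_mul,
    Complex.re_mul_ofReal, Complex.exp_ofReal_mul_I_re,
    show 2 * π * -(t * (ω / (2 * π))) = -(ω * t) by field_simp, Real.cos_neg]

theorem tendsto_setIntegral_cos_mul_atTop {s : Set ℝ} (hs : MeasurableSet s)
    (hs' : volume s ≠ ⊤) :
    Tendsto (fun ω : ℝ => ∫ t in s, Real.cos (ω * t)) atTop (𝓝 0) := by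
  have hind : Integrable (s.indicator 1 : ℝ → ℝ) :=
    (integrable_indicator_iff hs).mpr (integrableOn_const hs')
  refine (Real.tendsto_integral_cos_mul_atTop hind).congr fun ω => ?_
  rw [← integral_indicator hs]
  congr 1 with t
  by_cases ht : t ∈ s <;> simp [ht]

theorem integrableOn_cos_mul {s : Set ℝ} (hs' : volume s ≠ ⊤) (ω : ℝ) :
    IntegrableOn (fun t => Real.cos (ω * t)) s :=
  Measure.integrableOn_of_bounded hs' (by fun_prop : Continuous _).aestronglyMeasurable
    (M := 1) (ae_of_all _ fun t => by simpa using Real.abs_cos_le_one (ω * t))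

theorem tendsto_setIntegral_one_sub_cos_mul_sq_atTop {s : Set ℝ} (hs : MeasurableSet s)
    (hs' : volume s ≠ ⊤) :
    Tendsto (fun ω : ℝ => ∫ t in s, (1 - Real.cos (ω * t)) ^ 2) atTop
      (𝓝 (3 / 2 * volume.real s)) := by
  have hcos := tendsto_setIntegral_cos_mul_atTop hs hs'
  have hcos2 := hcos.comp (tendsto_id.const_mul_atTop two_pos)
  have hexpand (ω : ℝ) : ∫ t in s, (1 - Real.cos (ω * t)) ^ 2 =
      3 / 2 * volume.real s - 2 * (∫ t in s, Real.cos (ω * t)) +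
        (∫ t in s, Real.cos (2 * ω * t)) / 2 := by
    have hsq (t : ℝ) : (1 - Real.cos (ω * t)) ^ 2 =
        3 / 2 - 2 * Real.cos (ω * t) + Real.cos (2 * ω * t) / 2 := by
      rw [mul_assoc, Real.cos_two_mul]; ring
    simp_rw [hsq]
    have hc := integrableOn_cos_mul hs' ω
    have hc2 := integrableOn_cos_mul hs' (2 * ω)
    have hconst : IntegrableOn (fun _ => (3 / 2 : ℝ)) s := integrableOn_const hs'
    rw [integral_add (f := fun t => 3 / 2 - 2 * Real.cos (ω * t))
        (hconst.sub (hc.const_mul 2)) (hc2.div_const 2),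
      integral_sub hconst (hc.const_mul 2), integral_const_mul,
      integral_div 2 (fun t => Real.cos (2 * ω * t)), setIntegral_const, smul_eq_mul]
    ring
  simp_rw [hexpand]
  simpa using ((tendsto_const_nhds (x := 3 / 2 * volume.real s)).sub (hcos.const_mul 2)).add
    (hcos2.div_const 2)

theorem MeasureTheory.ae_tsum_eq_top_of_tsum_setLIntegral_eq_top {α ι : Type*}
    [MeasurableSpace α] [Countable ι] {μ : Measure α} [SigmaFinite μ] {f : ι → α → ℝ≥0∞}
    (hf : ∀ i, Measurable (f i))
    (h : ∀ s, MeasurableSet s → μ s ≠ 0 → μ s ≠ ⊤ → ∑' i, ∫⁻ x in s, f i x ∂μ = ⊤) :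
    ∀ᵐ x ∂μ, ∑' i, f i x = ⊤ := by
  have hcover : {x | ¬∑' i, f i x = ⊤} ⊆
      ⋃ (M : ℕ) (n : ℕ), spanningSets μ n ∩ {x | ∑' i, f i x ≤ M} := by
    intro x hx
    obtain ⟨M, hM⟩ := ENNReal.exists_nat_gt hx
    exact mem_iUnion₂.mpr ⟨M, _, mem_spanningSetsIndex μ x, hM.le⟩
  refine ae_iff.mpr (measure_mono_null hcover
    (measure_iUnion_null fun M => measure_iUnion_null fun n => ?_))
  set s := spanningSets μ n ∩ {x | ∑' i, f i x ≤ M}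
  have hs : MeasurableSet s := (measurableSet_spanningSets μ n).inter
    (measurableSet_le (Measurable.tsum hf) measurable_const)
  have hs_fin : μ s ≠ ⊤ :=
    ((measure_mono inter_subset_left).trans_lt (measure_spanningSets_lt_top μ n)).ne
  by_contra hs0
  have hbound : ∑' i, ∫⁻ x in s, f i x ∂μ ≤ M * μ s := by
    rw [← lintegral_tsum fun i => (hf i).aemeasurable]
    calc ∫⁻ x in s, ∑' i, f i x ∂μ ≤ ∫⁻ _ in s, (M : ℝ≥0∞) ∂μ :=
          setLIntegral_mono measurable_const fun x hx => hx.2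
      _ = M * μ s := setLIntegral_const _ _
  rw [h s hs hs0 hs_fin, top_le_iff] at hbound
  exact ENNReal.mul_ne_top (by simp) hs_fin hbound

theorem MeasureTheory.ae_not_summable_of_not_summable_setIntegral {α ι : Type*}
    [MeasurableSpace α] [Countable ι] {μ : Measure α} [SigmaFinite μ] {f : ι → α → ℝ}
    (hf0 : ∀ i x, 0 ≤ f i x) (hf : ∀ i, Measurable (f i))
    (hint : ∀ i s, MeasurableSet s → μ s ≠ ⊤ → IntegrableOn (f i) s μ)
    (h : ∀ s, MeasurableSet s → μ s ≠ 0 → μ s ≠ ⊤ → ¬Summable fun i => ∫ x in s, f i x ∂μ) :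
    ∀ᵐ x ∂μ, ¬Summable fun i => f i x := by
  have hdiv := ae_tsum_eq_top_of_tsum_setLIntegral_eq_top (μ := μ)
    (f := fun i x => ENNReal.ofReal (f i x)) (fun i => (hf i).ennreal_ofReal)
    fun s hs hs0 hs_fin => by
      simp_rw [← ofReal_integral_eq_lintegral_ofReal (hint _ s hs hs_fin) (ae_of_all _ (hf0 _))]
      by_contra hfin
      refine h s hs hs0 hs_fin ((ENNReal.summable_toReal hfin).congr fun i => ?_)
      exact ENNReal.toReal_ofReal (setIntegral_nonneg hs fun x _ => hf0 i x)
  filter_upwards [hdiv] with x hx hsum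
  exact hsum.tsum_ofReal_ne_top hx

theorem ae_not_summable_mul_one_sub_cos_mul_sq {c ω : ℕ → ℝ} (hc0 : ∀ m, 0 ≤ c m)
    (hc : ¬Summable c) (hω : Tendsto ω atTop atTop) :
    ∀ᵐ t, ¬Summable fun m => c m * (1 - Real.cos (ω m * t)) ^ 2 := by
  have hsq_le (x : ℝ) : (1 - Real.cos x) ^ 2 ≤ 4 := by
    nlinarith [Real.cos_le_one x, Real.neg_one_le_cos x]
  refine ae_not_summable_of_not_summable_setIntegral (fun m t => by have := hc0 m; positivity)
    (fun m => by fun_prop) (fun m s _ hs_fin => ?_) fun s hs hs0 hs_fin hsum => hc ?_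
  · refine Measure.integrableOn_of_bounded hs_fin
      (by fun_prop : Continuous _).aestronglyMeasurable (M := c m * 4) (ae_of_all _ fun t => ?_)
    rw [Real.norm_of_nonneg (mul_nonneg (hc0 m) (sq_nonneg _))]
    exact mul_le_mul_of_nonneg_left (hsq_le _) (hc0 m)
  · have hv : 0 < volume.real s := ENNReal.toReal_pos hs0 hs_fin
    have hev : ∀ᶠ m in atTop, volume.real s ≤ ∫ t in s, (1 - Real.cos (ω m * t)) ^ 2 :=
      ((tendsto_setIntegral_one_sub_cos_mul_sq_atTop hs hs_fin).comp hω).eventually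
        (eventually_ge_nhds (by linarith))
    simp_rw [integral_const_mul] at hsum
    refine (summable_mul_right_iff hv.ne').mp (hsum.of_norm_bounded_eventually_nat ?_)
    filter_upwards [hev] with m hm
    rw [Real.norm_of_nonneg (mul_nonneg (hc0 m) hv.le)]
    exact mul_le_mul_of_nonneg_left hm (hc0 m)

theorem not_summable_inv_two_mul_add_one : ¬Summable fun m : ℕ => (2 * (m : ℝ) + 1)⁻¹ := by
  intro h
  refine Real.not_summable_natCast_inv ((summable_nat_add_iff 1).mp ?_)
  refine (h.mul_left 2).of_nonneg_of_le (fun m => by positivity) fun m => ?_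
  push_cast
  field_simp
  linarith

theorem solCoef_sq_le (k : ℕ) (t : ℝ) : solCoef k t ^ 2 ≤ 64 / π ^ 10 / (k : ℝ) ^ 10 := by
  have hnum : |2 * (1 - (-1 : ℝ) ^ k) * (1 - Real.cos ((k : ℝ) ^ 2 * π ^ 2 * t))| ≤ 8 := by
    have h1 : |1 - (-1 : ℝ) ^ k| ≤ 2 := by
      rcases neg_one_pow_eq_or ℝ k with h | h <;> rw [h] <;> norm_num
    have h2 : |1 - Real.cos ((k : ℝ) ^ 2 * π ^ 2 * t)| ≤ 2 := by
      rw [abs_le]; constructor <;> linarith [Real.cos_le_one ((k : ℝ) ^ 2 * π ^ 2 * t),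
        Real.neg_one_le_cos ((k : ℝ) ^ 2 * π ^ 2 * t)]
    rw [abs_mul, abs_mul, abs_two]
    linarith [mul_le_mul h1 h2 (abs_nonneg _) zero_le_two]
  have hform : solCoef k t = 2 * (1 - (-1 : ℝ) ^ k) * (1 - Real.cos ((k : ℝ) ^ 2 * π ^ 2 * t)) /
      ((k : ℝ) * π) ^ 5 := by
    unfold solCoef; ring
  calc solCoef k t ^ 2 ≤ (8 / ((k : ℝ) * π) ^ 5) ^ 2 := by
        rw [← sq_abs, hform, abs_div, abs_of_nonneg (by positivity : (0 : ℝ) ≤ (k * π) ^ 5)]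
        gcongr
    _ = 64 / π ^ 10 / (k : ℝ) ^ 10 := by ring

theorem solInHs_of_lt {s : ℝ} (hs : s < 9 / 2) (t : ℝ) : solInHs s t := by
  have hmaj : Summable fun k : ℕ => 64 / π ^ 10 * ((k : ℝ) + 1) ^ (2 * s - 10) := by
    refine Summable.mul_left _ ?_
    exact_mod_cast (summable_nat_add_iff 1).mpr (Real.summable_nat_rpow.mpr (by linarith))
  refine hmaj.of_nonneg_of_le (fun k => by positivity) fun k => ?_
  have hk : (0 : ℝ) < k + 1 := by positivity
  calc ((k : ℝ) + 1) ^ (2 * s) * solCoef (k + 1) t ^ 2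
      ≤ ((k : ℝ) + 1) ^ (2 * s) * (64 / π ^ 10 / ((k : ℝ) + 1) ^ 10) := by
        gcongr; exact_mod_cast solCoef_sq_le (k + 1) t
    _ = 64 / π ^ 10 * ((k : ℝ) + 1) ^ (2 * s - 10) := by
        rw [Real.rpow_sub hk, Real.rpow_ofNat]; ring

theorem rpow_nine_halves_mul_solCoef_odd_sq (m : ℕ) (t : ℝ) :
    (((2 * m : ℕ) : ℝ) + 1) ^ (2 * (9 / 2 : ℝ)) * solCoef (2 * m + 1) t ^ 2 =
      16 / π ^ 10 *
        ((2 * (m : ℝ) + 1)⁻¹ * (1 - Real.cos (((2 * m + 1 : ℕ) : ℝ) ^ 2 * π ^ 2 * t)) ^ 2) := by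
  have hodd : (-1 : ℝ) ^ (2 * m + 1) = -1 := Odd.neg_one_pow ⟨m, rfl⟩
  rw [show (2 * (9 / 2 : ℝ)) = (9 : ℕ) by norm_num, Real.rpow_natCast]
  unfold solCoef
  rw [hodd]
  push_cast
  field_simp
  ring

theorem summable_odd_of_solInHs_nine_halves {t : ℝ} (h : solInHs (9 / 2) t) :
    Summable fun m : ℕ =>
      (2 * (m : ℝ) + 1)⁻¹ * (1 - Real.cos (((2 * m + 1 : ℕ) : ℝ) ^ 2 * π ^ 2 * t)) ^ 2 := by
  have hodd := h.comp_injective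
    (mul_right_injective₀ two_ne_zero : Function.Injective (2 * · : ℕ → ℕ))
  exact (summable_mul_left_iff (by positivity : (16 / π ^ 10 : ℝ) ≠ 0)).mp
    (hodd.congr fun m => rpow_nine_halves_mul_solCoef_odd_sq m t)

/-- The solution of `∂²w/∂t² + ∂⁴w/∂x⁴ = 1` on `(0,1)×[0,∞)` with zero
initial data and pinned boundary conditions satisfies `w(·,t) ∈ H^{9/2−ε}(0,1)` for every
`t ≥ 0` and `ε > 0`, but `w(·,t) ∉ H^{9/2}(0,1)` for generic (almost every) `t ≥ 0`. -/
theorem dispersive_regularity_limit :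
    (∀ t : ℝ, 0 ≤ t → ∀ ε : ℝ, 0 < ε → solInHs (9 / 2 - ε) t) ∧
    (∀ᵐ t ∂(volume.restrict (Ici (0 : ℝ))), ¬ solInHs (9 / 2) t) := by
  refine ⟨fun t _ ε hε => solInHs_of_lt (by linarith) t, ae_restrict_of_ae ?_⟩
  have hodd : Tendsto (fun m : ℕ => 2 * m + 1) atTop atTop :=
    tendsto_atTop_mono (fun m => (by omega : m ≤ 2 * m + 1)) tendsto_id
  have hω : Tendsto (fun m : ℕ => ((2 * m + 1 : ℕ) : ℝ) ^ 2 * π ^ 2) atTop atTop :=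
    ((tendsto_pow_atTop two_ne_zero).comp (tendsto_natCast_atTop_atTop.comp hodd)).atTop_mul_const
      (by positivity)
  filter_upwards [ae_not_summable_mul_one_sub_cos_mul_sq (fun m => by positivity)
    not_summable_inv_two_mul_add_one hω] with t ht hs
  exact ht (summable_odd_of_solInHs_nine_halves hs)
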